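/- Let F = {f₁,...,f_N} be homeomorphisms of S¹ with probability vector p (p_j > 0, Σ p_j = 1), and let μ₋ be a nonatomic fully supported Borel probability measure invariant for the inverse IFS, i.e., μ₋(E) = Σ_j p_j μ₋(f_j(E)) for all Borel E. Define ρ(x,y) := min{μ₋([x,y]), μ₋([y,x])}. Then (F,p) is non-expansive on average with respect to ρ: for all x,y ∈ S¹, Σ_j p_j ρ(f_j(x), f_j(y)) ≤ ρ(x,y). -/

import Mathlib

open MeasureTheory
open scoped NNReal

/-- The representative in `[0,1)` of a point of the circle `S¹ = ℝ/ℤ`. -/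
noncomputable def rep (z : UnitAddCircle) : ℝ := ((AddCircle.equivIco 1 0 z) : ℝ)

/-- The positively oriented closed arc from `x` to `y` on the circle. -/
def arc (x y : UnitAddCircle) : Set UnitAddCircle := {z | rep (z - x) ≤ rep (y - x)}

/-!
Write `ρ(x,y) = min (μ [x,y]) (μ [y,x])`. Invariance gives `μ E = ∑ j, p j * μ (f_j E)` for
every Borel set `E`; take `E = [x,y]`. The image `f_j [x,y]` is a connected set containing
`f_j x` and `f_j y`, so it contains one of the two arcs joining them, whence
`ρ(f_j x, f_j y) ≤ μ (f_j [x,y])`. Summing, `∑ j, p j * ρ(f_j x, f_j y) ≤ μ [x,y]`, and by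
symmetry also `≤ μ [y,x]`.
-/

open Set
open scoped ENNReal

lemma rep_mem_Ico (z : UnitAddCircle) : rep z ∈ Ico (0 : ℝ) 1 := by
  simpa only [rep, zero_add] using (AddCircle.equivIco 1 0 z).2

lemma coe_rep (z : UnitAddCircle) : ((rep z : ℝ) : UnitAddCircle) = z :=
  (AddCircle.equivIco 1 0).symm_apply_apply z

lemma rep_coe (t : ℝ) : rep (t : UnitAddCircle) = Int.fract t := by
  simp [rep, AddCircle.coe_equivIco_mk_apply]

lemma rep_zero : rep 0 = 0 := by
  simpa only [AddCircle.coe_zero, Int.fract_zero] using rep_coe 0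

lemma rep_injective : Function.Injective rep := fun z w h => by
  rw [← coe_rep z, ← coe_rep w, h]

lemma rep_pos {z : UnitAddCircle} (hz : z ≠ 0) : 0 < rep z :=
  (rep_mem_Ico z).1.lt_of_ne fun h => hz (rep_injective (h.symm.trans rep_zero.symm))

lemma rep_sub_eq_fract (x y u : UnitAddCircle) :
    rep (x - y) = Int.fract (rep (x - u) - rep (y - u)) := by
  rw [← rep_coe, AddCircle.coe_sub, coe_rep, coe_rep, sub_sub_sub_cancel_right]

lemma continuousAt_rep_sub {z u : UnitAddCircle} (hz : z ≠ u) :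
    ContinuousAt (fun w => rep (w - u)) z :=
  continuous_subtype_val.continuousAt.comp <|
    (AddCircle.continuousAt_equivIco 1 0 (sub_ne_zero.mpr hz)).comp (f := fun w => w - u)
      (continuous_id.sub continuous_const).continuousAt

lemma left_mem_arc (x y : UnitAddCircle) : x ∈ arc x y := by
  show rep (x - x) ≤ rep (y - x)
  simpa only [sub_self, rep_zero] using (rep_mem_Ico (y - x)).1

lemma right_mem_arc (x y : UnitAddCircle) : y ∈ arc x y :=
  le_refl (rep (y - x))

lemma arc_eq_image (x y : UnitAddCircle) :
    arc x y = (fun t : ℝ => x + (t : UnitAddCircle)) '' Icc 0 (rep (y - x)) := by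
  ext z
  constructor
  · intro hz
    exact ⟨rep (z - x), ⟨(rep_mem_Ico _).1, hz⟩, by simp only [coe_rep, add_sub_cancel]⟩
  · rintro ⟨t, ⟨ht0, hty⟩, rfl⟩
    show rep (x + (t : UnitAddCircle) - x) ≤ rep (y - x)
    rwa [add_sub_cancel_left, rep_coe,
      Int.fract_eq_self.mpr ⟨ht0, hty.trans_lt (rep_mem_Ico _).2⟩]

lemma isCompact_arc (x y : UnitAddCircle) : IsCompact (arc x y) := by
  rw [arc_eq_image]
  exact isCompact_Icc.image (continuous_const.add (AddCircle.continuous_mk' 1))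

lemma isPreconnected_arc (x y : UnitAddCircle) : IsPreconnected (arc x y) := by
  rw [arc_eq_image]
  exact isPreconnected_Icc.image _ (continuous_const.add (AddCircle.continuous_mk' 1)).continuousOn

lemma measurableSet_arc (x y : UnitAddCircle) : MeasurableSet (arc x y) :=
  (isCompact_arc x y).isClosed.measurableSet

lemma Int.fract_eq_or_of_mem_Ico {x : ℝ} (h₁ : -1 ≤ x) (h₂ : x < 1) :
    (0 ≤ x ∧ Int.fract x = x) ∨ (x < 0 ∧ Int.fract x = x + 1) := by
  rcases le_or_gt 0 x with hx | hx
  · exact Or.inl ⟨hx, Int.fract_eq_self.mpr ⟨hx, h₂⟩⟩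
  · refine Or.inr ⟨hx, ?_⟩
    rw [← Int.fract_add_one]
    exact Int.fract_eq_self.mpr ⟨by linarith, by linarith⟩

/-- With `A, B, V` the positions of `a, b, v` measured from a point `u ≠ a`, the hypotheses say
`u ∈ arc a b` and `v ∈ arc b a`. -/
lemma mem_Icc_of_fract_le {A B V : ℝ} (hA : A ∈ Ioo 0 1) (hB : B ∈ Ico 0 1) (hV : V ∈ Ico 0 1)
    (hu : Int.fract (0 - A) ≤ Int.fract (B - A)) (hv : Int.fract (V - B) ≤ Int.fract (A - B)) :
    V ∈ Icc B A := by
  obtain ⟨hA₀, hA₁⟩ := hA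
  obtain ⟨hB₀, hB₁⟩ := hB
  obtain ⟨hV₀, hV₁⟩ := hV
  rcases Int.fract_eq_or_of_mem_Ico (x := 0 - A) (by linarith) (by linarith) with h₁ | h₁ <;>
  rcases Int.fract_eq_or_of_mem_Ico (x := B - A) (by linarith) (by linarith) with h₂ | h₂ <;>
  rcases Int.fract_eq_or_of_mem_Ico (x := V - B) (by linarith) (by linarith) with h₃ | h₃ <;>
  rcases Int.fract_eq_or_of_mem_Ico (x := A - B) (by linarith) (by linarith) with h₄ | h₄ <;>
  exact ⟨by linarith, by linarith⟩

lemma arc_subset_or_arc_subset_of_isPreconnected {C : Set UnitAddCircle} (hC : IsPreconnected C)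
    {a b : UnitAddCircle} (ha : a ∈ C) (hb : b ∈ C) : arc a b ⊆ C ∨ arc b a ⊆ C := by
  by_contra! h
  obtain ⟨u, hu, huC⟩ := not_subset.mp h.1
  obtain ⟨v, hv, hvC⟩ := not_subset.mp h.2
  -- Cut the circle at `u ∉ C`: the coordinate `rep (· - u)` is continuous on `C` and puts `v`
  -- between `b` and `a`, so the intermediate value theorem forces `v ∈ C`.
  have hφ : ContinuousOn (fun w => rep (w - u)) C := fun z hz =>
    (continuousAt_rep_sub (ne_of_mem_of_not_mem hz huC)).continuousWithinAt
  have hv' : rep (v - u) ∈ Icc (rep (b - u)) (rep (a - u)) := by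
    refine mem_Icc_of_fract_le ⟨rep_pos (sub_ne_zero.mpr (ne_of_mem_of_not_mem ha huC)),
      (rep_mem_Ico _).2⟩ (rep_mem_Ico _) (rep_mem_Ico _) ?_ ?_
    · rw [← rep_zero, ← sub_self u, ← rep_sub_eq_fract, ← rep_sub_eq_fract]
      exact hu
    · rw [← rep_sub_eq_fract, ← rep_sub_eq_fract]
      exact hv
  obtain ⟨c, hc, hcv⟩ := hC.intermediate_value hb ha hφ hv'
  exact hvC (sub_left_injective (rep_injective hcv) ▸ hc)

lemma min_measure_arc_le_measure_image_arc {μ : Measure UnitAddCircle} [IsFiniteMeasure μ]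
    {f : UnitAddCircle → UnitAddCircle} (hf : Continuous f) (a b : UnitAddCircle) :
    min (μ (arc (f a) (f b))).toReal (μ (arc (f b) (f a))).toReal ≤ (μ (f '' arc a b)).toReal := by
  rcases arc_subset_or_arc_subset_of_isPreconnected
      ((isPreconnected_arc a b).image f hf.continuousOn)
      (mem_image_of_mem f (left_mem_arc a b)) (mem_image_of_mem f (right_mem_arc a b)) with h | h
  · exact (min_le_left _ _).trans (measureReal_mono h)
  · exact (min_le_right _ _).trans (measureReal_mono h)

lemma measure_toReal_eq_sum_image_of_eq_sum_map {X ι : Type*} [TopologicalSpace X]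
    [MeasurableSpace X] [BorelSpace X] [Fintype ι] {μ : Measure X} [IsFiniteMeasure μ]
    {F : ι → X ≃ₜ X} {p : ι → ℝ≥0} (hinv : μ = ∑ j, p j • Measure.map (F j).symm μ)
    {S : Set X} (hS : MeasurableSet S) :
    (μ S).toReal = ∑ j, (p j : ℝ) * (μ (F j '' S)).toReal := by
  have h : μ S = ∑ j, (p j : ℝ≥0∞) * μ (F j '' S) := by
    conv_lhs => rw [hinv]
    rw [Measure.finsetSum_apply]
    refine Finset.sum_congr rfl fun j _ => ?_
    rw [Measure.smul_apply, Measure.map_apply (F j).symm.continuous.measurable hS,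
      Homeomorph.preimage_symm, ENNReal.smul_def, smul_eq_mul]
  rw [h, ENNReal.toReal_sum fun j _ => ENNReal.mul_ne_top ENNReal.coe_ne_top (measure_ne_top μ _)]
  simp only [ENNReal.toReal_mul, ENNReal.coe_toReal]

theorem stmt9_general {N : ℕ} (F : Fin N → UnitAddCircle ≃ₜ UnitAddCircle)
    (p : Fin N → ℝ≥0)
    (μ : Measure UnitAddCircle) [IsProbabilityMeasure μ]
    (hinv : μ = ∑ j, p j • Measure.map ((F j).symm) μ) :
    ∀ x y : UnitAddCircle,
      ∑ j, (p j : ℝ) *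
          min (μ (arc (F j x) (F j y))).toReal (μ (arc (F j y) (F j x))).toReal ≤
        min (μ (arc x y)).toReal (μ (arc y x)).toReal := by
  have hle : ∀ a b : UnitAddCircle, ∑ j, (p j : ℝ) *
      min (μ (arc (F j a) (F j b))).toReal (μ (arc (F j b) (F j a))).toReal ≤ (μ (arc a b)).toReal := by
    intro a b
    rw [measure_toReal_eq_sum_image_of_eq_sum_map hinv (measurableSet_arc a b)]
    gcongr with j
    exact min_measure_arc_le_measure_image_arc (F j).continuous a b
  intro x y
  refine le_min (hle x y) ?_
  simpa only [min_comm] using hle y x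

/-- if `μ₋` is a nonatomic fully supported probability measure invariant for
the inverse IFS (`μ₋(E) = Σ_j p_j μ₋(f_j(E))`), then the IFS `(F,p)` is non-expansive on
average with respect to the metric `ρ(x,y) = min (μ₋ [x,y]) (μ₋ [y,x])`. -/
theorem stmt9 {N : ℕ} (F : Fin N → UnitAddCircle ≃ₜ UnitAddCircle)
    (p : Fin N → ℝ≥0) (hp : ∀ j, 0 < p j) (hsum : ∑ j, p j = 1)
    (μ : Measure UnitAddCircle) [IsProbabilityMeasure μ]
    (hna : ∀ z : UnitAddCircle, μ {z} = 0)
    (hfull : ∀ U : Set UnitAddCircle, IsOpen U → U.Nonempty → 0 < μ U)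
    (hinv : μ = ∑ j, p j • Measure.map ((F j).symm) μ) :
    ∀ x y : UnitAddCircle,
      ∑ j, (p j : ℝ) *
          min (μ (arc (F j x) (F j y))).toReal (μ (arc (F j y) (F j x))).toReal ≤
        min (μ (arc x y)).toReal (μ (arc y x)).toReal :=
  stmt9_general F p μ hinv
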